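/- Let h : Σ₂* → Σ₃* be the morphism defined by h(0) = 0012 and h(1) = 0112. Then for every infinite word w' over Σ₂ = {0,1}, the infinite word w = h(w') has the property that if x is a subword of w with |x| ≥ 3, then x^R is not a subword of w. -/

import Mathlib

/-- `x` occurs as a contiguous block of consecutive letters of the infinite word `w`. -/
def IsFactor {α : Type*} (x : List α) (w : ℕ → α) : Prop :=
  ∃ i : ℕ, x = (List.range x.length).map fun j => w (i + j)

/-- The morphism `h` with `h(0) = 0012` and `h(1) = 0112`. -/
def h : Fin 2 → List (Fin 3)
  | 0 => [0, 0, 1, 2]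
  | 1 => [0, 1, 1, 2]

/-- The image `h(w')` of an infinite word `w'` under the (4-uniform) morphism `h`:
the `n`-th letter of `h(w'₀)h(w'₁)h(w'₂)⋯`. -/
def hOmega (w' : ℕ → Fin 2) : ℕ → Fin 3 :=
  fun n => (h (w' (n / 4))).getD (n % 4) 0

private lemma fin2cases (a : Fin 2) : a = 0 ∨ a = 1 := by
  fin_cases a <;> simp

lemma hO_mod0 {w' : ℕ → Fin 2} {n : ℕ} (hn : n % 4 = 0) : hOmega w' n = 0 := by
  rcases fin2cases (w' (n / 4)) with hw | hw <;> simp [hOmega, hn, hw, h]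

lemma hO_mod2 {w' : ℕ → Fin 2} {n : ℕ} (hn : n % 4 = 2) : hOmega w' n = 1 := by
  rcases fin2cases (w' (n / 4)) with hw | hw <;> simp [hOmega, hn, hw, h]

lemma hO_mod3 {w' : ℕ → Fin 2} {n : ℕ} (hn : n % 4 = 3) : hOmega w' n = 2 := by
  rcases fin2cases (w' (n / 4)) with hw | hw <;> simp [hOmega, hn, hw, h]

lemma hO_eq2 {w' : ℕ → Fin 2} {n : ℕ} (hn : hOmega w' n = 2) : n % 4 = 3 := by
  have h4 : n % 4 = 0 ∨ n % 4 = 1 ∨ n % 4 = 2 ∨ n % 4 = 3 := by omega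
  rcases h4 with hm | hm | hm | hm
  · rw [hO_mod0 hm] at hn; exact absurd hn (by decide)
  · rcases fin2cases (w' (n / 4)) with hw | hw <;> simp [hOmega, hm, hw, h] at hn
  · rw [hO_mod2 hm] at hn; exact absurd hn (by decide)
  · exact hm

lemma factor_get {α : Type*} {x : List α} {w : ℕ → α} {i : ℕ}
    (hx : x = (List.range x.length).map fun j => w (i + j))
    (k : ℕ) (hk : k < x.length) : x[k] = w (i + k) := by
  rw [List.getElem_of_eq hx hk]
  simp

/-- For every infinite binary word `w'`, if `x` is a subword of `h(w')` with `|x| ≥ 3`,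
then `x^R` is not a subword of `h(w')`. -/
theorem stmt_4 (w' : ℕ → Fin 2) :
    ∀ x : List (Fin 3), IsFactor x (hOmega w') → 3 ≤ x.length →
      ¬ IsFactor x.reverse (hOmega w') := by
  intro x hx hlen hr
  obtain ⟨i, hxe⟩ := hx
  obtain ⟨j, hre⟩ := hr
  have lrev : x.reverse.length = x.length := List.length_reverse
  -- value of reverse at position k equals x at position length-1-k
  have grx : ∀ k (hk : k < x.length), hOmega w' (j + k) = x[x.length - 1 - k]'(by omega) := by
    intro k hk
    have h1 := factor_get hre k (by omega)
    rw [List.getElem_reverse] at h1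
    simpa using h1.symm
  set n := x.length with hn
  set j' := j + (n - 3) with hj'
  have hc : hOmega w' j' = hOmega w' (i + 2) := by
    have := grx (n - 3) (by omega)
    rw [this]
    have h2 : n - 1 - (n - 3) = 2 := by omega
    rw [show x[n - 1 - (n-3)]'(by omega) = x[2]'(by omega) by congr 1]
    exact factor_get hxe 2 (by omega)
  have hb : hOmega w' (j' + 1) = hOmega w' (i + 1) := by
    have := grx (n - 2) (by omega)
    rw [show j' + 1 = j + (n - 2) by omega, this,
      show x[n - 1 - (n-2)]'(by omega) = x[1]'(by omega) by congr 1; omega]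
    exact factor_get hxe 1 (by omega)
  have ha : hOmega w' (j' + 2) = hOmega w' (i + 0) := by
    have := grx (n - 1) (by omega)
    rw [show j' + 2 = j + (n - 1) by omega, this,
      show x[n - 1 - (n-1)]'(by omega) = x[0]'(by omega) by congr 1; omega]
    exact factor_get hxe 0 (by omega)
  rw [show i + 0 = i by omega] at ha
  have h4 : i % 4 = 0 ∨ i % 4 = 1 ∨ i % 4 = 2 ∨ i % 4 = 3 := by omega
  rcases h4 with hm | hm | hm | hm
  · -- triple at i is (0, b, 1)
    have h4' : j' % 4 = 0 ∨ j' % 4 = 1 ∨ j' % 4 = 2 ∨ j' % 4 = 3 := by omega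
    rcases h4' with hm' | hm' | hm' | hm'
    · have e1 := hO_mod0 (w' := w') hm'
      rw [hc, hO_mod2 (show (i + 2) % 4 = 2 by omega)] at e1
      exact absurd e1 (by decide)
    · have e1 := hO_mod3 (w' := w') (show (j' + 2) % 4 = 3 by omega)
      rw [ha, hO_mod0 hm] at e1
      exact absurd e1 (by decide)
    · have e1 := hO_mod3 (w' := w') (show (j' + 1) % 4 = 3 by omega)
      rw [hb] at e1
      have := hO_eq2 e1
      omega
    · have e1 := hO_mod3 (w' := w') (show j' % 4 = 3 from hm')
      rw [hc] at e1
      have := hO_eq2 e1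
      omega
  · -- c = u (i+2) = 2
    have e1 : hOmega w' j' = 2 := by
      rw [hc]; exact hO_mod3 (show (i + 2) % 4 = 3 by omega)
    have hj3 := hO_eq2 e1
    have e2 := hO_mod0 (w' := w') (show (j' + 1) % 4 = 0 by omega)
    rw [hb, hO_mod2 (show (i + 1) % 4 = 2 by omega)] at e2
    exact absurd e2 (by decide)
  · -- b = u (i+1) = 2
    have e1 : hOmega w' (j' + 1) = 2 := by
      rw [hb]; exact hO_mod3 (show (i + 1) % 4 = 3 by omega)
    have hj3 := hO_eq2 e1
    have e2 := hO_mod2 (w' := w') (show j' % 4 = 2 by omega)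
    rw [hc, hO_mod0 (show (i + 2) % 4 = 0 by omega)] at e2
    exact absurd e2 (by decide)
  · -- a = u i = 2
    have e1 : hOmega w' (j' + 2) = 2 := by
      rw [ha]; exact hO_mod3 hm
    have hj3 := hO_eq2 e1
    have e2 := hO_mod2 (w' := w') (show (j' + 1) % 4 = 2 by omega)
    rw [hb, hO_mod0 (show (i + 1) % 4 = 0 by omega)] at e2
    exact absurd e2 (by decide)
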